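/- Let sᵢ, tᵢ : ℝ^{i−1} → ℝ (for i = 1, …, n) be continuously differentiable and define the autoregressive map I : ℝⁿ → ℝⁿ by I(x)ᵢ = sᵢ(x₁, …, x_{i−1}) · xᵢ + tᵢ(x₁, …, x_{i−1}). Then I is differentiable, its Jacobian matrix at every x is lower triangular with diagonal entries (DI(x))_{ii} = sᵢ(x₁, …, x_{i−1}), and its Jacobian determinant equals det DI(x) = ∏_{i=1}^{n} sᵢ(x₁, …, x_{i−1}). -/

import Mathlib

open scoped BigOperators

/-- The coordinates preceding coordinate `i` of `x ∈ ℝⁿ`. -/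
def prevCoords {n : ℕ} (x : Fin n → ℝ) (i : Fin n) : Fin i → ℝ :=
  fun j => x (Fin.castLE i.isLt.le j)

theorem LinearMap.det_eq_prod_of_lowerTriangular {R ι : Type*} [CommRing R] [Fintype ι]
    [DecidableEq ι] [LinearOrder ι] (f : (ι → R) →ₗ[R] (ι → R))
    (hf : ∀ i j, i < j → f (Pi.single j 1) i = 0) :
    LinearMap.det f = ∏ i, f (Pi.single i 1) i := by
  rw [← LinearMap.det_toMatrix', Matrix.det_of_isLowerTriangular _ fun i j hij => by
    rw [LinearMap.toMatrix'_apply, hf i j hij]]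
  simp only [LinearMap.toMatrix'_apply]

theorem differentiable_prevCoords {n : ℕ} (i : Fin n) :
    Differentiable ℝ fun x : Fin n → ℝ => prevCoords x i :=
  differentiable_pi.2 fun _ => differentiable_apply _

theorem prevCoords_add_smul_single {n : ℕ} (x : Fin n → ℝ) (c : ℝ) {i j : Fin n} (hij : i ≤ j) :
    prevCoords (x + c • Pi.single j 1) i = prevCoords x i := by
  funext k
  have hk : Fin.castLE i.isLt.le k ≠ j := Fin.ne_of_lt (lt_of_lt_of_le k.isLt hij)
  simp [prevCoords, Pi.single_eq_of_ne hk]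

section Autoregressive

variable {n : ℕ} {s t : (i : Fin n) → (Fin i → ℝ) → ℝ} {I : (Fin n → ℝ) → (Fin n → ℝ)}

theorem differentiable_of_autoregressive (hs : ∀ i, Differentiable ℝ (s i))
    (ht : ∀ i, Differentiable ℝ (t i))
    (hI : ∀ x i, I x i = s i (prevCoords x i) * x i + t i (prevCoords x i)) :
    Differentiable ℝ I := by
  refine differentiable_pi.2 fun i => ?_
  simp only [hI]
  have hp := differentiable_prevCoords i
  exact ((hs i).comp hp).mul (differentiable_apply i) |>.add ((ht i).comp hp)

/-- Along the `j`-th coordinate line, with `i ≤ j`, the `i`-th output is an affine function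
whose slope is `sᵢ(x₁,…,x_{i−1}) · δᵢⱼ`. -/
theorem fderiv_single_apply_of_autoregressive
    (hI : ∀ x i, I x i = s i (prevCoords x i) * x i + t i (prevCoords x i))
    {x : Fin n → ℝ} (hx : DifferentiableAt ℝ I x) {i j : Fin n} (hij : i ≤ j) :
    fderiv ℝ I x (Pi.single j 1) i = s i (prevCoords x i) * (Pi.single j 1 : Fin n → ℝ) i := by
  have hline : (fun c : ℝ => I (x + c • Pi.single j 1) i) = fun c =>
      s i (prevCoords x i) * (x i + c * (Pi.single j 1 : Fin n → ℝ) i) + t i (prevCoords x i) := by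
    funext c
    rw [hI, prevCoords_add_smul_single x c hij]
    simp
  have hderiv : HasDerivAt (fun c : ℝ => I (x + c • Pi.single j 1) i)
      (fderiv ℝ I x (Pi.single j 1) i) 0 :=
    hasDerivAt_pi.1 (hx.hasFDerivAt.hasLineDerivAt (Pi.single j 1)) i
  rw [hline] at hderiv
  refine hderiv.unique ?_
  simpa using
    (((hasDerivAt_id (0 : ℝ)).mul_const ((Pi.single j 1 : Fin n → ℝ) i)).const_add (x i)
      |>.const_mul (s i (prevCoords x i))).add_const (t i (prevCoords x i))

end Autoregressive

/-- An autoregressive map `I(x)ᵢ = sᵢ(x₁,…,x_{i−1})·xᵢ + tᵢ(x₁,…,x_{i−1})` with `C¹`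
scales and translations is differentiable, its Jacobian matrix is lower triangular
with diagonal entries `sᵢ(x₁,…,x_{i−1})`, and its Jacobian determinant is
`∏ᵢ sᵢ(x₁,…,x_{i−1})`. -/
theorem autoregressive_jacobian
    {n : ℕ}
    (s t : (i : Fin n) → (Fin i → ℝ) → ℝ)
    (hs : ∀ i, ContDiff ℝ 1 (s i)) (ht : ∀ i, ContDiff ℝ 1 (t i))
    (I : (Fin n → ℝ) → (Fin n → ℝ))
    (hI : ∀ (x : Fin n → ℝ) (i : Fin n),
      I x i = s i (prevCoords x i) * x i + t i (prevCoords x i)) :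
    ∀ x : Fin n → ℝ,
      DifferentiableAt ℝ I x ∧
      (∀ i j : Fin n, i < j → fderiv ℝ I x (Pi.single j 1) i = 0) ∧
      (∀ i : Fin n, fderiv ℝ I x (Pi.single i 1) i = s i (prevCoords x i)) ∧
      (fderiv ℝ I x).det = ∏ i : Fin n, s i (prevCoords x i) := by
  intro x
  have hx : DifferentiableAt ℝ I x := differentiable_of_autoregressive
    (fun i => (hs i).differentiable one_ne_zero) (fun i => (ht i).differentiable one_ne_zero) hI x
  have habove : ∀ i j : Fin n, i < j → fderiv ℝ I x (Pi.single j 1) i = 0 := fun i j hij => by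
    rw [fderiv_single_apply_of_autoregressive hI hx hij.le, Pi.single_eq_of_ne hij.ne, mul_zero]
  have hdiag : ∀ i : Fin n, fderiv ℝ I x (Pi.single i 1) i = s i (prevCoords x i) := fun i => by
    rw [fderiv_single_apply_of_autoregressive hI hx le_rfl, Pi.single_eq_same, mul_one]
  refine ⟨hx, habove, hdiag, ?_⟩
  rw [ContinuousLinearMap.det, LinearMap.det_eq_prod_of_lowerTriangular _ habove]
  exact Finset.prod_congr rfl fun i _ => hdiag i
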